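/- Let A, N_1, …, N_m ∈ ℝ^{n×n}, X₀ ∈ ℝ^{n×q}, v₀ ∈ ℝ^q, γ > 0 with every eigenvalue of I ⊗ A + A ⊗ I + γ^{-2} Σ_{k=1}^m N_k ⊗ N_k having strictly negative real part, let u ∈ L² be a continuous control, and let x_{x₀} solve the homogeneous bilinear system ẋ(t) = A x(t) + Σ_{k=1}^m N_k x(t) u_k(t), x(0) = X₀ v₀. Set P₀ := ∫₀^∞ Z_γ(s, X₀X₀^⊤) ds, and let p be a unit eigenvector of P₀ with eigenvalue λ ≥ 0. Then (∫₀^∞ ⟨x_{x₀}(t), p⟩² dt)^{1/2} ≤ λ^{1/2} · exp{0.5 ‖γ u⁰‖_{L²}²} · ‖v₀‖₂. -/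

import Mathlib

open MeasureTheory Matrix
open scoped Kronecker Classical

set_option linter.unusedVariables false

attribute [local instance] Matrix.normedAddCommGroup Matrix.normedSpace

/-!
With `ψ(t) = exp (-∫₀ᵗ ‖γ u⁰‖²)` and `c = ‖v₀‖²`, the matrix `D(t) = c Z(t) - ψ(t) x(t) x(t)ᵀ`
satisfies `Ḋ = L(D) + R(t)`, where `L(M) = A M + M Aᵀ + γ⁻² ∑ₖ Nₖ M Nₖᵀ` and
`R = ψ ∑ₖ rₖ rₖᵀ` with `rₖ = γ u⁰ₖ x - γ⁻¹ Nₖ x`; moreover `D(0) = X₀ (c I - v₀ v₀ᵀ) X₀ᵀ ⪰ 0` by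
Cauchy–Schwarz. The operator `L` is cross-positive (if `M ⪰ 0` and `wᵀ M w = 0` then
`wᵀ L(M) w ≥ 0`), so the flow cannot leave the cone of nonnegative quadratic forms: perturb by
`ε e^{C t} I` and look at the first time the quadratic form touches zero on the unit sphere.
Hence `⟨x(t), p⟩² ≤ ψ(t)⁻¹ c pᵀ Z(t) p ≤ e^{‖γ u⁰‖²} c pᵀ Z(t) p`, and integrating in `t` gives
`e^{‖γ u⁰‖²} c pᵀ P₀ p = e^{‖γ u⁰‖²} c λ`.
-/

open Set Filter Topology

theorem nonneg_of_deriv_pos_at_first_zero {E : Type*} [TopologicalSpace E] {K : Set E}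
    (hK : IsCompact K) {q q' : ℝ → E → ℝ} {T : ℝ}
    (hq : ContinuousOn (fun p : ℝ × E => q p.1 p.2) (Icc 0 T ×ˢ K))
    (hq' : ∀ t ∈ Ioc 0 T, ∀ w ∈ K, HasDerivWithinAt (q · w) (q' t w) (Iio t) t)
    (h0 : ∀ w ∈ K, 0 < q 0 w)
    (hzero : ∀ t ∈ Ioc 0 T, ∀ w ∈ K, (∀ v ∈ K, 0 ≤ q t v) → q t w = 0 → 0 < q' t w) :
    ∀ t ∈ Icc 0 T, ∀ w ∈ K, 0 ≤ q t w := by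
  by_contra! hneg
  obtain ⟨t₀, ht₀, w₀, hw₀, hq₀⟩ := hneg
  -- the earliest time at which `q` fails to be positive somewhere on `K`
  obtain ⟨⟨s, z⟩, ⟨⟨hs, hz⟩, hsz⟩, hmin⟩ :=
    (hq.lowerSemicontinuousOn.isCompact_inter_preimage_Iic (isCompact_Icc.prod hK) 0).exists_isMinOn
      ⟨(t₀, w₀), ⟨ht₀, hw₀⟩, hq₀.le⟩ continuous_fst.continuousOn
  have hbefore : ∀ t ∈ Ico 0 s, ∀ v ∈ K, 0 < q t v := fun t ht v hv => by
    by_contra! hle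
    exact (isMinOn_iff.1 hmin (t, v) ⟨⟨⟨ht.1, ht.2.le.trans hs.2⟩, hv⟩, hle⟩).not_gt ht.2
  have hs0 : 0 < s := hs.1.lt_of_ne fun h => (h0 z hz).not_ge (h ▸ hsz)
  have hleft : ∀ᶠ t in 𝓝[<] s, t ∈ Ico 0 s :=
    mem_of_superset (Ioo_mem_nhdsLT hs0) Ioo_subset_Ico_self
  have hnonneg : ∀ v ∈ K, 0 ≤ q s v := fun v hv => by
    have hcont : ContinuousWithinAt (q · v) (Icc 0 T) s :=
      (hq.comp (continuous_id.prodMk continuous_const).continuousOn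
        fun t ht => mk_mem_prod ht hv) s hs
    have hsub : 𝓝[<] s ≤ 𝓝[Icc 0 T] s := by
      rw [← nhdsWithin_Ioo_eq_nhdsLT hs0]
      exact nhdsWithin_mono _ fun t ht => ⟨ht.1.le, ht.2.le.trans hs.2⟩
    exact ge_of_tendsto (hcont.tendsto.mono_left hsub)
      (hleft.mono fun t ht => (hbefore t ht v hv).le)
  have hzero' : q s z = 0 := le_antisymm hsz (hnonneg z hz)
  have hslope := (hasDerivWithinAt_iff_tendsto_slope' self_notMem_Iio).1
    (hq' s ⟨hs0, hs.2⟩ z hz)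
  refine (hzero s ⟨hs0, hs.2⟩ z hz hnonneg hzero').not_ge (le_of_tendsto hslope ?_)
  filter_upwards [hleft] with t ht
  rw [slope_def_field, hzero', sub_zero]
  exact div_nonpos_of_nonneg_of_nonpos (hbefore t ht z hz).le (sub_nonpos.2 ht.2.le)

lemma two_mul_mul_sum_le {ι : Type*} [Fintype ι] {γ : ℝ} (hγ : γ ≠ 0) (a : ℝ) (v b : ι → ℝ) :
    2 * a * ∑ k, v k * b k ≤ (∑ k, (γ * v k) ^ 2) * a ^ 2 + (γ ^ 2)⁻¹ * ∑ k, b k ^ 2 := by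
  rw [Finset.mul_sum, Finset.sum_mul, Finset.mul_sum, ← Finset.sum_add_distrib]
  refine Finset.sum_le_sum fun k _ => ?_
  have h := two_mul_le_add_sq (γ * v k * a) (γ⁻¹ * b k)
  calc 2 * a * (v k * b k) = 2 * (γ * v k * a) * (γ⁻¹ * b k) := by field_simp
    _ ≤ _ := h
    _ = _ := by field_simp

section MaskedInput

variable {ι α : Type*} [Zero α] [DecidableEq α] (N : ι → α)

lemma continuous_ite_eq_zero {u : ℝ → ι → ℝ} (hu : Continuous u) :
    Continuous fun s k => if N k = 0 then 0 else u s k :=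
  continuous_pi fun k => by by_cases hk : N k = 0 <;> simp [hk] <;> fun_prop

lemma sum_sq_mul_ite_le [Fintype ι] (γ : ℝ) (u : ι → ℝ) :
    ∑ k, (γ * if N k = 0 then 0 else u k) ^ 2 ≤ γ ^ 2 * ∑ k, u k ^ 2 := by
  rw [Finset.mul_sum]
  exact Finset.sum_le_sum fun k _ => by
    by_cases hk : N k = 0 <;> simp [hk, mul_pow]; positivity

end MaskedInput

namespace Matrix

variable {n ι : Type*} [Fintype n] [Fintype ι]

/-- Unlike `Matrix.PosSemidef`, no symmetry is required: `Z(t)` is not known to be symmetric. -/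
def QuadNonneg (M : Matrix n n ℝ) : Prop := ∀ w : n → ℝ, 0 ≤ w ⬝ᵥ M *ᵥ w

lemma dotProduct_add_smul_mulVec_add_smul (M : Matrix n n ℝ) (w v : n → ℝ) (s : ℝ) :
    (w + s • v) ⬝ᵥ M *ᵥ (w + s • v)
      = v ⬝ᵥ M *ᵥ v * (s * s) + (w ⬝ᵥ M *ᵥ v + v ⬝ᵥ M *ᵥ w) * s + w ⬝ᵥ M *ᵥ w := by
  simp only [mulVec_add, mulVec_smul, dotProduct_add, add_dotProduct, dotProduct_smul,
    smul_dotProduct, smul_eq_mul]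
  ring

lemma QuadNonneg.dotProduct_mulVec_add_eq_zero {M : Matrix n n ℝ} (hM : M.QuadNonneg)
    {w : n → ℝ} (hw : w ⬝ᵥ M *ᵥ w = 0) (v : n → ℝ) :
    w ⬝ᵥ M *ᵥ v + v ⬝ᵥ M *ᵥ w = 0 := by
  have h := discrim_le_zero fun s => (dotProduct_add_smul_mulVec_add_smul M w v s).symm ▸ hM _
  rw [discrim, hw, mul_zero, sub_zero] at h
  exact pow_eq_zero_iff two_ne_zero |>.1 (le_antisymm h (sq_nonneg _))

lemma quadNonneg_of_sphere {M : Matrix n n ℝ}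
    (h : ∀ w ∈ Metric.sphere (0 : n → ℝ) 1, 0 ≤ w ⬝ᵥ M *ᵥ w) : M.QuadNonneg := by
  intro w
  rcases eq_or_ne w 0 with rfl | hw
  · simp
  have hunit : ‖w‖⁻¹ • w ∈ Metric.sphere (0 : n → ℝ) 1 := by
    simpa using norm_smul_inv_norm (𝕜 := ℝ) hw
  have hscale : w = ‖w‖ • (‖w‖⁻¹ • w) := by
    rw [smul_smul, mul_inv_cancel₀ (norm_ne_zero_iff.2 hw), one_smul]
  rw [hscale, mulVec_smul, dotProduct_smul, smul_dotProduct]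
  simpa only [smul_eq_mul] using
    mul_nonneg (norm_nonneg w) (mul_nonneg (norm_nonneg w) (h _ hunit))

lemma QuadNonneg.smul {M : Matrix n n ℝ} (hM : M.QuadNonneg) {c : ℝ} (hc : 0 ≤ c) :
    (c • M).QuadNonneg := fun w => by
  rw [smul_mulVec, dotProduct_smul, smul_eq_mul]; exact mul_nonneg hc (hM w)

lemma dotProduct_vecMulVec_mulVec (a b w : n → ℝ) :
    w ⬝ᵥ vecMulVec a b *ᵥ w = (a ⬝ᵥ w) * (b ⬝ᵥ w) := by
  rw [vecMulVec_mulVec, op_smul_eq_smul, dotProduct_smul, smul_eq_mul, dotProduct_comm w a, mul_comm]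

lemma dotProduct_smul_sub_smul_vecMulVec_mulVec (c a : ℝ) (M : Matrix n n ℝ) (x w : n → ℝ) :
    w ⬝ᵥ (c • M - a • vecMulVec x x) *ᵥ w = c * (w ⬝ᵥ M *ᵥ w) - a * ((x ⬝ᵥ w) * (x ⬝ᵥ w)) := by
  rw [sub_mulVec, smul_mulVec, smul_mulVec, dotProduct_sub, dotProduct_smul, dotProduct_smul,
    dotProduct_vecMulVec_mulVec, smul_eq_mul, smul_eq_mul]

lemma dotProduct_self_pos {w : n → ℝ} (hw : w ≠ 0) : 0 < w ⬝ᵥ w := by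
  simpa using dotProduct_star_self_pos_iff.2 hw

lemma exists_dotProduct_mulVec_lt_mul (B : Matrix n n ℝ) :
    ∃ C : ℝ, ∀ w ∈ Metric.sphere (0 : n → ℝ) 1, w ⬝ᵥ B *ᵥ w < C * (w ⬝ᵥ w) := by
  have hpos : ∀ w ∈ Metric.sphere (0 : n → ℝ) 1, 0 < w ⬝ᵥ w := fun w hw =>
    dotProduct_self_pos (ne_zero_of_mem_unit_sphere ⟨w, hw⟩)
  obtain ⟨C, hC⟩ := (isCompact_sphere (0 : n → ℝ) 1).bddAbove_image
    (f := fun w => (w ⬝ᵥ B *ᵥ w) / (w ⬝ᵥ w)) fun w hw =>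
      ((continuous_id.dotProduct (continuous_const.matrix_mulVec continuous_id)).continuousAt.div
        (continuous_id.dotProduct continuous_id).continuousAt (hpos w hw).ne').continuousWithinAt
  refine ⟨C + 1, fun w hw => ?_⟩
  have h := (div_le_iff₀ (hpos w hw)).1 (hC ⟨w, hw, rfl⟩)
  linarith [hpos w hw]

/-- Cross-positivity (Schneider–Vidyasagar): the linear maps `L` for which `exp (t • L)` preserves
nonnegative quadratic forms. -/
def CrossPositive (L : Matrix n n ℝ →ₗ[ℝ] Matrix n n ℝ) : Prop :=
  ∀ M : Matrix n n ℝ, M.QuadNonneg → ∀ w : n → ℝ, w ⬝ᵥ M *ᵥ w = 0 → 0 ≤ w ⬝ᵥ L M *ᵥ w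

def lyapunovMap (A : Matrix n n ℝ) (P : Matrix n n ℝ →ₗ[ℝ] Matrix n n ℝ) :
    Matrix n n ℝ →ₗ[ℝ] Matrix n n ℝ :=
  LinearMap.mulLeft ℝ A + LinearMap.mulRight ℝ Aᵀ + P

@[simp] lemma lyapunovMap_apply (A : Matrix n n ℝ) (P : Matrix n n ℝ →ₗ[ℝ] Matrix n n ℝ)
    (M : Matrix n n ℝ) : lyapunovMap A P M = A * M + M * Aᵀ + P M := rfl

lemma dotProduct_mulVec_lyapunov (A M : Matrix n n ℝ) (w : n → ℝ) :
    w ⬝ᵥ (A * M + M * Aᵀ) *ᵥ w = w ⬝ᵥ M *ᵥ (Aᵀ *ᵥ w) + (Aᵀ *ᵥ w) ⬝ᵥ M *ᵥ w := by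
  rw [add_mulVec, dotProduct_add, ← mulVec_mulVec, ← mulVec_mulVec, dotProduct_mulVec w A,
    ← mulVec_transpose, add_comm]

lemma crossPositive_lyapunovMap (A : Matrix n n ℝ) {P : Matrix n n ℝ →ₗ[ℝ] Matrix n n ℝ}
    (hP : ∀ M : Matrix n n ℝ, M.QuadNonneg → (P M).QuadNonneg) :
    CrossPositive (lyapunovMap A P) := by
  intro M hM w hw
  rw [lyapunovMap_apply, add_mulVec _ (P M), dotProduct_add, dotProduct_mulVec_lyapunov,
    hM.dotProduct_mulVec_add_eq_zero hw, zero_add]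
  exact hP M hM w

def sumConj (N : ι → Matrix n n ℝ) : Matrix n n ℝ →ₗ[ℝ] Matrix n n ℝ :=
  ∑ k, LinearMap.mulRight ℝ (N k)ᵀ ∘ₗ LinearMap.mulLeft ℝ (N k)

@[simp] lemma sumConj_apply (N : ι → Matrix n n ℝ) (M : Matrix n n ℝ) :
    sumConj N M = ∑ k, N k * M * (N k)ᵀ := by
  simp [sumConj]

lemma dotProduct_mul_mulVec_mul_transpose (N M : Matrix n n ℝ) (w : n → ℝ) :
    w ⬝ᵥ (N * M * Nᵀ) *ᵥ w = (Nᵀ *ᵥ w) ⬝ᵥ M *ᵥ (Nᵀ *ᵥ w) := by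
  rw [← mulVec_mulVec, ← mulVec_mulVec, dotProduct_mulVec w N, ← mulVec_transpose]

lemma QuadNonneg.sumConj {M : Matrix n n ℝ} (hM : M.QuadNonneg) (N : ι → Matrix n n ℝ) :
    (sumConj N M).QuadNonneg := fun w => by
  rw [sumConj_apply, sum_mulVec _ _ w, dotProduct_sum]
  exact Finset.sum_nonneg fun k _ => by
    rw [dotProduct_mul_mulVec_mul_transpose]; exact hM _

lemma sum_ite_smul_mulVec (N : ι → Matrix n n ℝ) (u : ι → ℝ) (y : n → ℝ) :
    ∑ k, (if N k = 0 then 0 else u k) • N k *ᵥ y = ∑ k, u k • N k *ᵥ y :=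
  Finset.sum_congr rfl fun k _ => by by_cases hk : N k = 0 <;> simp [hk]

noncomputable def quadFormAt (w : n → ℝ) : Matrix n n ℝ →L[ℝ] ℝ :=
  LinearMap.toContinuousLinearMap
    { toFun := fun M => w ⬝ᵥ M *ᵥ w
      map_add' := fun M M' => by rw [add_mulVec, dotProduct_add]
      map_smul' := fun c M => by rw [smul_mulVec, dotProduct_smul]; rfl }

@[simp] lemma quadFormAt_apply (w : n → ℝ) (M : Matrix n n ℝ) : quadFormAt w M = w ⬝ᵥ M *ᵥ w :=
  rfl

lemma _root_.HasDerivAt.dotProduct_mulVec_self {Z : ℝ → Matrix n n ℝ} {Z' : Matrix n n ℝ} {t : ℝ}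
    (h : HasDerivAt Z Z' t) (w : n → ℝ) :
    HasDerivAt (fun s => w ⬝ᵥ Z s *ᵥ w) (w ⬝ᵥ Z' *ᵥ w) t :=
  (quadFormAt w).hasFDerivAt.comp_hasDerivAt t h

lemma _root_.HasDerivAt.dotProduct_const {x : ℝ → n → ℝ} {x' : n → ℝ} {t : ℝ}
    (h : HasDerivAt x x' t) (w : n → ℝ) : HasDerivAt (fun s => x s ⬝ᵥ w) (x' ⬝ᵥ w) t := by
  simpa [dotProduct] using HasDerivAt.fun_sum fun i _ => (hasDerivAt_pi.1 h i).mul_const (w i)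

lemma dotProduct_lyapunov_vecMulVec (A : Matrix n n ℝ) (x w : n → ℝ) :
    w ⬝ᵥ (A * vecMulVec x x + vecMulVec x x * Aᵀ) *ᵥ w = 2 * (x ⬝ᵥ w) * (A *ᵥ x ⬝ᵥ w) := by
  rw [mul_vecMulVec, vecMulVec_mul, vecMul_transpose, add_mulVec, dotProduct_add,
    dotProduct_vecMulVec_mulVec, dotProduct_vecMulVec_mulVec]
  ring

lemma dotProduct_conj_vecMulVec (N : Matrix n n ℝ) (x w : n → ℝ) :
    w ⬝ᵥ (N * vecMulVec x x * Nᵀ) *ᵥ w = (N *ᵥ x ⬝ᵥ w) ^ 2 := by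
  rw [dotProduct_mul_mulVec_mul_transpose, dotProduct_vecMulVec_mulVec,
    dotProduct_transpose_mulVec, dotProduct_comm w, sq]

lemma quadNonneg_smul_mul_transpose_sub_vecMulVec {m : Type*} [Fintype m] (X : Matrix n m ℝ)
    (v : m → ℝ) : ((∑ i, v i ^ 2) • (X * Xᵀ) - vecMulVec (X *ᵥ v) (X *ᵥ v)).QuadNonneg := by
  intro w
  have hgram : w ⬝ᵥ (X * Xᵀ) *ᵥ w = ∑ i, (Xᵀ *ᵥ w) i ^ 2 := by
    rw [← mulVec_mulVec, dotProduct_mulVec, ← mulVec_transpose]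
    simp [dotProduct, sq]
  rw [sub_mulVec, smul_mulVec, dotProduct_sub, dotProduct_smul, smul_eq_mul, hgram,
    dotProduct_vecMulVec_mulVec, dotProduct_comm _ w, ← dotProduct_transpose_mulVec, ← sq,
    dotProduct_comm, sub_nonneg, mul_comm]
  exact Finset.sum_mul_sq_le_sq_mul_sq _ _ _

variable [DecidableEq n]

lemma dotProduct_add_smul_one_mulVec (M : Matrix n n ℝ) (e : ℝ) (w : n → ℝ) :
    w ⬝ᵥ (M + e • 1) *ᵥ w = w ⬝ᵥ M *ᵥ w + e * (w ⬝ᵥ w) := by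
  rw [add_mulVec, smul_mulVec, one_mulVec, dotProduct_add, dotProduct_smul, smul_eq_mul]

theorem quadNonneg_of_hasDerivAt {L : Matrix n n ℝ →ₗ[ℝ] Matrix n n ℝ} (hL : CrossPositive L)
    {D : ℝ → Matrix n n ℝ} {D' : ℝ → (n → ℝ) → ℝ} (hDc : ContinuousOn D (Ici 0))
    (hD : ∀ t, 0 ≤ t → ∀ w, HasDerivAt (fun s => w ⬝ᵥ D s *ᵥ w) (D' t w) t)
    (hLD : ∀ t, 0 ≤ t → ∀ w, w ⬝ᵥ L (D t) *ᵥ w ≤ D' t w)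
    (h0 : (D 0).QuadNonneg) {T : ℝ} (hT : 0 ≤ T) : (D T).QuadNonneg := by
  obtain ⟨C, hC⟩ := exists_dotProduct_mulVec_lt_mul (L 1)
  -- `D t + ε e^{C t} • 1` stays nonnegative: at a first zero, cross-positivity and the choice
  -- of `C` make the quadratic form increase
  have hpert : ∀ ε > 0, ∀ w ∈ Metric.sphere (0 : n → ℝ) 1,
      0 ≤ w ⬝ᵥ (D T + (ε * Real.exp (C * T)) • 1) *ᵥ w := by
    intro ε hε
    refine nonneg_of_deriv_pos_at_first_zero (isCompact_sphere 0 1)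
      (q := fun t w => w ⬝ᵥ (D t + (ε * Real.exp (C * t)) • 1) *ᵥ w)
      (q' := fun t w => D' t w + ε * (Real.exp (C * t) * C) * (w ⬝ᵥ w)) ?_ ?_ ?_ ?_ T ⟨hT, le_rfl⟩
    · have hF : Continuous fun p : Matrix n n ℝ × (n → ℝ) => p.2 ⬝ᵥ p.1 *ᵥ p.2 := by fun_prop
      refine hF.comp_continuousOn (ContinuousOn.prodMk ?_ continuousOn_snd)
      exact (hDc.comp continuousOn_fst fun p hp => hp.1.1).add (by fun_prop)
    · intro t ht w _
      simp only [dotProduct_add_smul_one_mulVec]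
      have hexp := (((hasDerivAt_id t).const_mul C).exp.const_mul ε).mul_const (w ⬝ᵥ w)
      simp only [id, mul_one] at hexp
      exact ((hD t ht.1.le w).add hexp).hasDerivWithinAt
    · intro w hw
      simp only [dotProduct_add_smul_one_mulVec, mul_zero, Real.exp_zero, mul_one]
      have := dotProduct_self_pos (ne_zero_of_mem_unit_sphere ⟨w, hw⟩)
      have := h0 w
      positivity
    · intro t ht w hw hnonneg hzero
      have hpos := mul_pos (mul_pos hε (Real.exp_pos (C * t))) (sub_pos.2 (hC w hw))
      have hcross := hL _ (quadNonneg_of_sphere hnonneg) w hzero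
      rw [map_add, map_smul, add_mulVec, smul_mulVec, dotProduct_add, dotProduct_smul,
        smul_eq_mul] at hcross
      linarith [hLD t ht.1.le w]
  refine quadNonneg_of_sphere fun w hw => ge_of_tendsto (x := 𝓝[>] (0 : ℝ)) ?_
    (eventually_nhdsWithin_of_forall fun ε hε => hpert ε hε w hw)
  simp_rw [dotProduct_add_smul_one_mulVec]
  exact tendsto_nhdsWithin_of_tendsto_nhds (Continuous.tendsto' (by fun_prop) _ _ (by simp))

theorem quadNonneg_smul_sub_vecMulVec_of_bilinear {A : Matrix n n ℝ} {N : ι → Matrix n n ℝ}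
    {γ : ℝ} (hγ : γ ≠ 0) {v : ℝ → ι → ℝ} {Z : ℝ → Matrix n n ℝ}
    (hZ : ∀ t, 0 ≤ t →
      HasDerivAt Z (A * Z t + Z t * Aᵀ + (γ ^ 2)⁻¹ • ∑ k, N k * Z t * (N k)ᵀ) t)
    {x : ℝ → n → ℝ} (hx : ∀ t, 0 ≤ t → HasDerivAt x (A *ᵥ x t + ∑ k, v t k • N k *ᵥ x t) t)
    {ψ : ℝ → ℝ} (hψ : ∀ t, 0 ≤ t → HasDerivAt ψ (-(∑ k, (γ * v t k) ^ 2) * ψ t) t)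
    (hψ_nonneg : ∀ t, 0 ≤ t → 0 ≤ ψ t) {c : ℝ}
    (h0 : (c • Z 0 - ψ 0 • vecMulVec (x 0) (x 0)).QuadNonneg) {T : ℝ} (hT : 0 ≤ T) :
    (c • Z T - ψ T • vecMulVec (x T) (x T)).QuadNonneg := by
  refine quadNonneg_of_hasDerivAt (D := fun t => c • Z t - ψ t • vecMulVec (x t) (x t))
    (D' := fun t w => c * (w ⬝ᵥ (A * Z t + Z t * Aᵀ + (γ ^ 2)⁻¹ • ∑ k, N k * Z t * (N k)ᵀ) *ᵥ w)
      - (-(∑ k, (γ * v t k) ^ 2) * ψ t * ((x t ⬝ᵥ w) * (x t ⬝ᵥ w))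
        + ψ t * (((A *ᵥ x t + ∑ k, v t k • N k *ᵥ x t) ⬝ᵥ w) * (x t ⬝ᵥ w)
          + (x t ⬝ᵥ w) * ((A *ᵥ x t + ∑ k, v t k • N k *ᵥ x t) ⬝ᵥ w))))
    (crossPositive_lyapunovMap A (P := (γ ^ 2)⁻¹ • sumConj N)
      fun M hM => (hM.sumConj N).smul (inv_nonneg.2 (sq_nonneg γ)))
    (fun t ht => ContinuousAt.continuousWithinAt ?_) (fun t ht w => ?_) (fun t ht w => ?_) h0 hT
  · have := (hZ t ht).continuousAt
    have := (hx t ht).continuousAt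
    have := (hψ t ht).continuousAt
    fun_prop
  · simp only [dotProduct_smul_sub_smul_vecMulVec_mulVec]
    exact (((hZ t ht).dotProduct_mulVec_self w).const_mul c).sub
      ((hψ t ht).mul (((hx t ht).dotProduct_const w).mul ((hx t ht).dotProduct_const w)))
  · set L := lyapunovMap A ((γ ^ 2)⁻¹ • sumConj N)
    have hLZ : L (Z t) = A * Z t + Z t * Aᵀ + (γ ^ 2)⁻¹ • ∑ k, N k * Z t * (N k)ᵀ := by
      simp [L]
    have hLX : w ⬝ᵥ L (vecMulVec (x t) (x t)) *ᵥ w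
        = 2 * (x t ⬝ᵥ w) * (A *ᵥ x t ⬝ᵥ w) + (γ ^ 2)⁻¹ * ∑ k, (N k *ᵥ x t ⬝ᵥ w) ^ 2 := by
      rw [lyapunovMap_apply, add_mulVec, dotProduct_add, dotProduct_lyapunov_vecMulVec]
      simp only [LinearMap.smul_apply, sumConj_apply, smul_mulVec, sum_mulVec, dotProduct_smul,
        dotProduct_sum, dotProduct_conj_vecMulVec, smul_eq_mul]
    have hdx : (A *ᵥ x t + ∑ k, v t k • N k *ᵥ x t) ⬝ᵥ w
        = A *ᵥ x t ⬝ᵥ w + ∑ k, v t k * (N k *ᵥ x t ⬝ᵥ w) := by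
      simp only [add_dotProduct, sum_dotProduct, smul_dotProduct, smul_eq_mul]
    have hamgm := mul_le_mul_of_nonneg_left
      (two_mul_mul_sum_le hγ (x t ⬝ᵥ w) (v t) fun k => N k *ᵥ x t ⬝ᵥ w) (hψ_nonneg t ht)
    rw [map_sub, map_smul, map_smul, sub_mulVec, smul_mulVec, smul_mulVec, dotProduct_sub,
      dotProduct_smul, dotProduct_smul, smul_eq_mul, smul_eq_mul, hLZ, hLX, hdx]
    linarith [hamgm]

theorem sq_dotProduct_le_exp_mul_of_bilinear {A : Matrix n n ℝ} {N : ι → Matrix n n ℝ}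
    {γ : ℝ} (hγ : γ ≠ 0) {v : ℝ → ι → ℝ} (hv : Continuous v)
    (hv_int : IntegrableOn (fun s => ∑ k, (γ * v s k) ^ 2) (Ioi 0)) {Z : ℝ → Matrix n n ℝ}
    (hZ : ∀ t, 0 ≤ t →
      HasDerivAt Z (A * Z t + Z t * Aᵀ + (γ ^ 2)⁻¹ • ∑ k, N k * Z t * (N k)ᵀ) t)
    {x : ℝ → n → ℝ} (hx : ∀ t, 0 ≤ t → HasDerivAt x (A *ᵥ x t + ∑ k, v t k • N k *ᵥ x t) t)
    {c : ℝ} (h0 : (c • Z 0 - vecMulVec (x 0) (x 0)).QuadNonneg) {t : ℝ} (ht : 0 ≤ t)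
    (w : n → ℝ) :
    (x t ⬝ᵥ w) ^ 2 ≤ Real.exp (∫ s in Ioi 0, ∑ k, (γ * v s k) ^ 2) * (c * (w ⬝ᵥ Z t *ᵥ w)) := by
  set ρ : ℝ → ℝ := fun s => ∑ k, (γ * v s k) ^ 2
  have hρ : Continuous ρ := by fun_prop
  set ψ : ℝ → ℝ := fun t => Real.exp (-∫ s in 0..t, ρ s)
  have hψ : ∀ t, HasDerivAt ψ (-ρ t * ψ t) t := fun t => by
    simpa [ψ, mul_comm] using (hρ.integral_hasStrictDerivAt 0 t).hasDerivAt.neg.exp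
  have hcmp := quadNonneg_smul_sub_vecMulVec_of_bilinear hγ hZ hx (fun t _ => hψ t)
    (fun t _ => (Real.exp_pos _).le) (by simpa [ψ] using h0) ht w
  rw [dotProduct_smul_sub_smul_vecMulVec_mulVec, sub_nonneg, ← sq] at hcmp
  have hψ_ge : Real.exp (-∫ s in Ioi 0, ρ s) ≤ ψ t := by
    refine Real.exp_le_exp.2 (neg_le_neg ?_)
    rw [intervalIntegral.integral_of_le ht]
    exact setIntegral_mono_set hv_int (Eventually.of_forall fun s => by positivity)
      Ioc_subset_Ioi_self.eventuallyLE
  calc (x t ⬝ᵥ w) ^ 2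
      = Real.exp (∫ s in Ioi 0, ρ s) * (Real.exp (-∫ s in Ioi 0, ρ s) * (x t ⬝ᵥ w) ^ 2) := by
        rw [← mul_assoc, ← Real.exp_add, add_neg_cancel, Real.exp_zero, one_mul]
    _ ≤ Real.exp (∫ s in Ioi 0, ρ s) * (ψ t * (x t ⬝ᵥ w) ^ 2) := by gcongr
    _ ≤ _ := by gcongr

end Matrix

theorem dominant_subspace_estimate_P0
    {n q m : ℕ}
    (A : Matrix (Fin n) (Fin n) ℝ) (N : Fin m → Matrix (Fin n) (Fin n) ℝ)
    (X₀ : Matrix (Fin n) (Fin q) ℝ) (v₀ : Fin q → ℝ)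
    (γ : ℝ) (hγ : 0 < γ)
    (u : ℝ → Fin m → ℝ) (hu : Continuous u)
    (huL2 : IntegrableOn (fun s => ∑ k, (u s k) ^ 2) (Set.Ioi 0))
    -- `Z = Z_γ(·, X₀X₀ᵀ)` and `P₀ = ∫₀^∞ Z(s) ds`
    (Z : ℝ → Matrix (Fin n) (Fin n) ℝ)
    (hZ0 : Z 0 = X₀ * X₀ᵀ)
    (hZode : ∀ t, 0 ≤ t →
      HasDerivAt Z (A * Z t + Z t * Aᵀ + (γ ^ 2)⁻¹ • ∑ k, N k * Z t * (N k)ᵀ) t)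
    (hZint : @IntegrableOn _ _ _ _ SeminormedAddGroup.toContinuousENorm Z (Set.Ioi 0) volume)
    -- `x` solves the homogeneous bilinear system with `x(0) = X₀ v₀`
    (x : ℝ → Fin n → ℝ) (hx0 : x 0 = X₀.mulVec v₀)
    (hxode : ∀ t, 0 ≤ t →
      HasDerivAt x (A.mulVec (x t) + ∑ k, u t k • (N k).mulVec (x t)) t)
    -- `p` is a unit eigenvector of `P₀` with eigenvalue `lam ≥ 0`
    (p : Fin n → ℝ) (hp : ∑ i, p i ^ 2 = 1)
    (lam : ℝ)
    (heig : (∫ s in Set.Ioi (0 : ℝ), Z s).mulVec p = lam • p) :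
    Real.sqrt (∫ t in Set.Ioi (0 : ℝ), (∑ i, x t i * p i) ^ 2)
      ≤ Real.sqrt lam
        * Real.exp (0.5 * ∫ v in Set.Ioi (0 : ℝ),
            ∑ k, (γ * (if N k = 0 then (0 : ℝ) else u v k)) ^ 2)
        * Real.sqrt (∑ i, v₀ i ^ 2) := by
  set v : ℝ → Fin m → ℝ := fun s k => if N k = 0 then 0 else u s k
  set c := ∑ i, v₀ i ^ 2
  set I := ∫ s in Ioi 0, ∑ k, (γ * v s k) ^ 2
  have hv : Continuous v := continuous_ite_eq_zero N hu
  have hv_int : IntegrableOn (fun s => ∑ k, (γ * v s k) ^ 2) (Ioi 0) :=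
    (huL2.const_mul (γ ^ 2)).mono' (by fun_prop : Continuous _).aestronglyMeasurable
      (Eventually.of_forall fun s => (Real.norm_of_nonneg (by positivity)).trans_le
        (sum_sq_mul_ite_le N γ (u s)))
  have hx : ∀ t, 0 ≤ t → HasDerivAt x (A *ᵥ x t + ∑ k, v t k • N k *ᵥ x t) t := fun t ht => by
    simpa only [v, sum_ite_smul_mulVec] using hxode t ht
  have h0 : (c • Z 0 - vecMulVec (x 0) (x 0)).QuadNonneg := by
    rw [hZ0, hx0]
    exact quadNonneg_smul_mul_transpose_sub_vecMulVec X₀ v₀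
  have hZp : ∫ t in Ioi 0, p ⬝ᵥ Z t *ᵥ p = lam := by
    have hpp : p ⬝ᵥ p = 1 := by simpa [dotProduct, sq] using hp
    calc ∫ t in Ioi 0, p ⬝ᵥ Z t *ᵥ p = quadFormAt p (∫ s in Ioi 0, Z s) :=
          (quadFormAt p).integral_comp_comm hZint
      _ = lam := by rw [quadFormAt_apply, heig, dotProduct_smul, hpp, smul_eq_mul, mul_one]
  have hint : ∫ t in Ioi 0, (∑ i, x t i * p i) ^ 2 ≤ Real.exp I * (c * lam) := by
    rw [← hZp, ← integral_const_mul, ← integral_const_mul]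
    refine integral_mono_of_nonneg (Eventually.of_forall fun t => sq_nonneg _)
      ((((quadFormAt p).integrable_comp hZint).const_mul c).const_mul _)
      ((ae_restrict_iff' measurableSet_Ioi).2 (Eventually.of_forall fun t ht => ?_))
    exact sq_dotProduct_le_exp_mul_of_bilinear hγ.ne' hv hv_int hZode hx h0 (le_of_lt ht) p
  calc _ ≤ Real.sqrt (Real.exp I * (c * lam)) := Real.sqrt_le_sqrt hint
    _ = _ := by
      rw [show Real.exp I * (c * lam) = lam * Real.exp I * c by ring,
        Real.sqrt_mul' _ (by positivity), Real.sqrt_mul' _ (Real.exp_pos I).le, ← Real.exp_half]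
      norm_num [div_eq_inv_mul]
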